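/- Let M be the set of fixed-point-free involutions in the symmetric group on the set {1, 2, 3, 4, 5, 6} (M has exactly 15 elements), and let the subgroup H of S₆ generated by the permutations (1 2 3 4 5 6) and (2 6)(3 5) act on M by conjugation. Then this action has exactly 5 orbits, of sizes 1, 2, 3, 3 and 6. -/

import Mathlib

/-!
The generators of `H15` are the rotation `i ↦ i + 1` and the reflection `i ↦ -i` of `Fin 6`, so
`H15` is the dihedral group of order 12, consisting of the products `rotation ^ a * reflection ^ b`
with `a < 6`, `b < 2`: these twelve permutations contain `1` and are closed under right
multiplication by the generators and their inverses. With `H15`, `FPFInv` and every orbit written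
as explicit finsets, the orbits and their sizes are a finite computation.
-/

/-- The set of fixed-point-free involutions of `{1,…,6}` (realized on `Fin 6`). -/
def FPFInv : Set (Equiv.Perm (Fin 6)) := {σ | σ * σ = 1 ∧ ∀ i, σ i ≠ i}

/-- The subgroup of `S₆` generated by `(1 2 3 4 5 6)` and `(2 6)(3 5)`
(zero-indexed on `Fin 6`). -/
def H15 : Subgroup (Equiv.Perm (Fin 6)) :=
  Subgroup.closure
    {Equiv.swap 0 1 * Equiv.swap 1 2 * Equiv.swap 2 3 * Equiv.swap 3 4 * Equiv.swap 4 5,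
     Equiv.swap 1 5 * Equiv.swap 2 4}

/-- The orbits of the conjugation action of `H15` on `FPFInv`. -/
def Orbits15 : Set (Set (Equiv.Perm (Fin 6))) :=
  (fun σ => {τ | ∃ g ∈ H15, g * σ * g⁻¹ = τ}) '' FPFInv

open Equiv

theorem Subgroup.closure_subset_of_mul_mem {G : Type*} [Group G] {s T : Set G} (one : 1 ∈ T)
    (mul : ∀ t ∈ T, ∀ x ∈ s, t * x ∈ T ∧ t * x⁻¹ ∈ T) : (closure s : Set G) ⊆ T :=
  fun _ hg => closure_induction_right one (fun _ _ x hx ht => (mul _ ht x hx).1)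
    (fun _ _ x hx ht => (mul _ ht x hx).2) hg

theorem Set.ncard_image_finsetCoe {α : Type*} (X : Finset (Finset α)) :
    ((↑) '' (X : Set (Finset α)) : Set (Set α)).ncard = X.card := by
  rw [Set.ncard_image_of_injective _ Finset.coe_injective, Set.ncard_coe_finset]

theorem Set.image_finsetCoe_sep_ncard_eq {α : Type*} (X : Finset (Finset α)) (k : ℕ) :
    {S ∈ ((↑) '' (X : Set (Finset α)) : Set (Set α)) | S.ncard = k} =
      (↑) '' ((X.filter (·.card = k) : Finset (Finset α)) : Set (Finset α)) := by
  ext S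
  simp only [Set.mem_ofPred_eq, Set.mem_image, Finset.coe_filter]
  constructor
  · rintro ⟨⟨s, hs, rfl⟩, hk⟩
    exact ⟨s, ⟨hs, by rwa [Set.ncard_coe_finset] at hk⟩, rfl⟩
  · rintro ⟨s, ⟨hs, hk⟩, rfl⟩
    exact ⟨⟨s, hs, rfl⟩, by rwa [Set.ncard_coe_finset]⟩

def dihedralFinset : Finset (Perm (Fin 6)) :=
  (Finset.range 6 ×ˢ Finset.range 2).image fun p => finRotate 6 ^ p.1 * Equiv.neg (Fin 6) ^ p.2

def fpfInvFinset : Finset (Perm (Fin 6)) := {σ | σ * σ = 1 ∧ ∀ i, σ i ≠ i}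

def conjOrbitFinset (σ : Perm (Fin 6)) : Finset (Perm (Fin 6)) :=
  dihedralFinset.image fun g => g * σ * g⁻¹

def orbitFinsets15 : Finset (Finset (Perm (Fin 6))) := fpfInvFinset.image conjOrbitFinset

theorem H15_eq_closure : H15 = Subgroup.closure {finRotate 6, Equiv.neg (Fin 6)} := by
  rw [H15, show Equiv.swap 0 1 * Equiv.swap 1 2 * Equiv.swap 2 3 * Equiv.swap 3 4 * Equiv.swap 4 5
    = finRotate 6 by decide, show Equiv.swap 1 5 * Equiv.swap 2 4 = Equiv.neg (Fin 6) by decide]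

theorem coe_H15 : (H15 : Set (Perm (Fin 6))) = dihedralFinset := by
  rw [H15_eq_closure]
  refine (Subgroup.closure_subset_of_mul_mem (by decide) ?_).antisymm ?_
  · simp only [Set.mem_insert_iff, Set.mem_singleton_iff, forall_eq_or_imp, forall_eq,
      Finset.mem_coe]
    decide +kernel
  · intro g hg
    obtain ⟨⟨a, b⟩, -, rfl⟩ := Finset.mem_image.1 (Finset.mem_coe.1 hg)
    exact mul_mem (pow_mem (Subgroup.subset_closure (by simp)) a)
      (pow_mem (Subgroup.subset_closure (by simp)) b)

theorem FPFInv_eq : FPFInv = fpfInvFinset := by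
  ext σ
  simp [FPFInv, fpfInvFinset]

theorem Orbits15_eq : Orbits15 = (↑) '' (orbitFinsets15 : Set (Finset (Perm (Fin 6)))) := by
  have orbit_eq (σ : Perm (Fin 6)) :
      {τ | ∃ g ∈ H15, g * σ * g⁻¹ = τ} = conjOrbitFinset σ := by
    rw [conjOrbitFinset, Finset.coe_image, ← coe_H15]
    rfl
  simp only [Orbits15, orbit_eq, FPFInv_eq, orbitFinsets15, Finset.coe_image, Set.image_image]

theorem stmt15 :
    FPFInv.ncard = 15 ∧
    Orbits15.ncard = 5 ∧
    {S ∈ Orbits15 | S.ncard = 1}.ncard = 1 ∧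
    {S ∈ Orbits15 | S.ncard = 2}.ncard = 1 ∧
    {S ∈ Orbits15 | S.ncard = 3}.ncard = 2 ∧
    {S ∈ Orbits15 | S.ncard = 6}.ncard = 1 := by
  simp only [FPFInv_eq, Orbits15_eq, Set.image_finsetCoe_sep_ncard_eq, Set.ncard_image_finsetCoe,
    Set.ncard_coe_finset]
  decide +kernel
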